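/- arXiv:2306.13073 — 2 statements merged into one kernel-verified Lean document; each statement's English description precedes it below -/
import Mathlib

section
/- Let |ψ⟩_AB and |φ⟩_AB be pure states on a bipartite finite-dimensional Hilbert space with reduced states ρ_A = Tr_B|ψ⟩⟨ψ| and σ_A = Tr_B|φ⟩⟨φ|. Then there exists a unitary U acting only on system B such that F(ρ_A, σ_A) = |⟨φ|(id_A ⊗ U)|ψ⟩|² (Uhlmann's theorem, achievability direction). -/
open Matrix ComplexOrder

/-- The positive semidefinite square root of a matrix (junk value `0` off
positive semidefinite matrices). -/
noncomputable def msqrt {n : Type*} [Fintype n] [DecidableEq n] (A : Matrix n n ℂ) :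
    Matrix n n ℂ :=
  letI := Classical.propDecidable
  if h : A.PosSemidef then
    (h.1.eigenvectorUnitary : Matrix n n ℂ) * diagonal ((↑) ∘ Real.sqrt ∘ h.1.eigenvalues) *
      (star h.1.eigenvectorUnitary : Matrix n n ℂ)
  else 0

/-- The trace norm `‖X‖₁ = Tr √(XᴴX)`. -/
noncomputable def traceNorm {n : Type*} [Fintype n] [DecidableEq n] (X : Matrix n n ℂ) : ℝ :=
  (msqrt (Xᴴ * X)).trace.re

/-- The (squared) fidelity `F(ρ,σ) = ‖√ρ √σ‖₁²`. -/
noncomputable def fidelity {n : Type*} [Fintype n] [DecidableEq n] (ρ σ : Matrix n n ℂ) : ℝ :=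
  traceNorm (msqrt ρ * msqrt σ) ^ 2

/-- The trace distance `td(ρ,σ) = ‖ρ - σ‖₁ / 2`. -/
noncomputable def traceDist {n : Type*} [Fintype n] [DecidableEq n] (ρ σ : Matrix n n ℂ) : ℝ :=
  traceNorm (ρ - σ) / 2

/-- The outer product `|u⟩⟨v|`. -/
noncomputable def outer {n : Type*} (u v : n → ℂ) : Matrix n n ℂ :=
  Matrix.of fun i j => u i * (starRingEnd ℂ) (v j)

/-- Partial trace over the first tensor factor. -/
noncomputable def ptrFst {α β : Type*} [Fintype α] (M : Matrix (α × β) (α × β) ℂ) : Matrix β β ℂ :=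
  Matrix.of fun b b' => ∑ a, M (a, b) (a, b')

/-- Partial trace over the second tensor factor. -/
noncomputable def ptrSnd {α β : Type*} [Fintype β] (M : Matrix (α × β) (α × β) ℂ) : Matrix α α ℂ :=
  Matrix.of fun a a' => ∑ b, M (a, b) (a', b)

/-!
Write `ψ, φ` as matrices `M, N : Matrix α β ℂ`, so that `ρ = M Mᴴ`, `σ = N Nᴴ` and
`⟨φ|(1 ⊗ U)|ψ⟩ = tr (Nᴴ M Uᵀ)`. With `S = √σ`, `|√ρ √σ|² = S M Mᴴ S = (S M)(S M)ᴴ` while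
`|Nᴴ M|² = Mᴴ S S M = (S M)ᴴ (S M)`; since `X Xᴴ` and `Xᴴ X` have the same nonzero spectrum, the two
square roots have the same trace, so `√F(ρ, σ) = tr |Nᴴ M|`. A polar decomposition
`Nᴴ M = V |Nᴴ M|` finally gives `tr (Nᴴ M V⋆) = tr |Nᴴ M|`, so `U = (V⋆)ᵀ` works.

Polar decompositions of invertible `X` are explicit (`V = X |X|⁻¹`); the matrices admitting one
form a closed set since the unitary group is compact, and invertible matrices are dense.
-/

open scoped MatrixOrder
open Polynomial

namespace Matrix

section Sqrt

variable {n : Type*} [Fintype n] [DecidableEq n]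

theorem msqrt_eq_cfcSqrt {A : Matrix n n ℂ} (hA : A.PosSemidef) : msqrt A = CFC.sqrt A := by
  rw [CFC.sqrt_eq_real_sqrt A hA.nonneg, cfcₙ_eq_cfc, hA.1.cfc_eq, IsHermitian.cfc,
    Unitary.conjStarAlgAut_apply, msqrt, dif_pos hA]
  -- `msqrt` is built with classical decidable equality on `n`
  congr! <;> (congr; exact Subsingleton.elim _ _)

theorem posSemidef_msqrt {A : Matrix n n ℂ} (hA : A.PosSemidef) : (msqrt A).PosSemidef := by
  rw [msqrt_eq_cfcSqrt hA]
  exact (CFC.sqrt_nonneg A).posSemidef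

theorem msqrt_mul_msqrt {A : Matrix n n ℂ} (hA : A.PosSemidef) : msqrt A * msqrt A = A := by
  rw [msqrt_eq_cfcSqrt hA]
  exact CFC.sqrt_mul_sqrt_self A hA.nonneg

theorem msqrt_eq_of_mul_self_eq {A B : Matrix n n ℂ} (hB : B.PosSemidef) (h : B * B = A) :
    msqrt A = B := by
  have hA : A.PosSemidef := by
    simpa only [hB.isHermitian.eq, h] using posSemidef_conjTranspose_mul_self B
  rw [msqrt_eq_cfcSqrt hA]
  exact CFC.sqrt_unique h hB.nonneg

theorem msqrt_eq_aeval {A : Matrix n n ℂ} (hA : A.PosSemidef) (p : ℝ[X])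
    (hp : ∀ x ∈ spectrum ℝ A, p.eval x = √x) : msqrt A = aeval A p := by
  rw [msqrt_eq_cfcSqrt hA, CFC.sqrt_eq_real_sqrt A hA.nonneg, cfcₙ_eq_cfc,
    ← cfc_polynomial p A hA.1.isSelfAdjoint]
  exact cfc_congr fun x hx => (hp x hx).symm

end Sqrt

section TraceComm

variable {m n R : Type*} [Fintype m] [Fintype n] [DecidableEq m] [DecidableEq n] [CommSemiring R]

theorem mul_pow_succ_eq_mul_pow_mul (A : Matrix m n R) (B : Matrix n m R) (k : ℕ) :
    (A * B) ^ (k + 1) = A * (B * A) ^ k * B := by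
  induction k with
  | zero => simp
  | succ k ih => rw [pow_succ, ih, pow_succ]; simp only [Matrix.mul_assoc]

theorem trace_mul_pow_succ_comm (A : Matrix m n R) (B : Matrix n m R) (k : ℕ) :
    ((A * B) ^ (k + 1)).trace = ((B * A) ^ (k + 1)).trace := by
  rw [mul_pow_succ_eq_mul_pow_mul, Matrix.mul_assoc, trace_mul_comm, Matrix.mul_assoc, ← pow_succ]

theorem trace_aeval_mul_comm {S : Type*} [CommSemiring S] [Algebra S R] (A : Matrix m n R)
    (B : Matrix n m R) {p : S[X]} (hp : p.coeff 0 = 0) :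
    (aeval (A * B) p).trace = (aeval (B * A) p).trace := by
  simp only [aeval_eq_sum_range, trace_sum, trace_smul]
  refine Finset.sum_congr rfl fun k _ => ?_
  cases k with
  | zero => simp [hp]
  | succ k => rw [trace_mul_pow_succ_comm]

/-- On the finite set `{0} ∪ σ(XᴴX) ∪ σ(XXᴴ)` the square root is a polynomial vanishing at `0`. -/
theorem trace_msqrt_conjTranspose_mul_self (X : Matrix m n ℂ) :
    (msqrt (Xᴴ * X)).trace = (msqrt (X * Xᴴ)).trace := by
  let s : Finset ℝ := insert 0
    ((spectrum ℝ (Xᴴ * X)).toFinite.toFinset ∪ (spectrum ℝ (X * Xᴴ)).toFinite.toFinset)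
  let p : ℝ[X] := Lagrange.interpolate s id Real.sqrt
  have hp : ∀ x ∈ s, p.eval x = √x := fun x hx =>
    Lagrange.eval_interpolate_at_node _ (Set.injOn_id _) hx
  have hp0 : p.coeff 0 = 0 := by
    rw [coeff_zero_eq_eval_zero, hp 0 (Finset.mem_insert_self _ _), Real.sqrt_zero]
  rw [msqrt_eq_aeval (posSemidef_conjTranspose_mul_self X) p fun x hx => hp x (by simp [s, hx]),
    msqrt_eq_aeval (posSemidef_self_mul_conjTranspose X) p fun x hx => hp x (by simp [s, hx]),
    trace_aeval_mul_comm _ _ hp0]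

end TraceComm

section Polar

open Filter Topology

variable {n 𝕜 : Type*} [Fintype n] [RCLike 𝕜]

theorem isClosed_setOf_posSemidef : IsClosed {A : Matrix n n 𝕜 | A.PosSemidef} := by
  simp only [posSemidef_iff_dotProduct_mulVec, Set.ofPred_and, Set.ofPred_forall]
  refine (isClosed_eq (by fun_prop) continuous_id).inter (isClosed_iInter fun x => ?_)
  exact isClosed_le continuous_const (by fun_prop)

variable [DecidableEq n]

theorem isCompact_unitaryGroup : IsCompact (unitaryGroup n 𝕜 : Set (Matrix n n 𝕜)) := by
  refine (isCompact_univ_pi fun _ => isCompact_univ_pi fun _ =>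
    isCompact_closedBall (0 : 𝕜) 1).of_isClosed_subset (isClosed_unitary (R := Matrix n n 𝕜))
    fun U hU => ?_
  simpa [Set.mem_pi] using entry_norm_bound_of_unitary hU

theorem isClosed_setOf_exists_unitary_star_mul_posSemidef :
    IsClosed {X : Matrix n n 𝕜 | ∃ V ∈ unitaryGroup n 𝕜, (star V * X).PosSemidef} := by
  have : CompactSpace (unitaryGroup n 𝕜) := isCompact_iff_compactSpace.mp isCompact_unitaryGroup
  have hC : IsClosed {p : unitaryGroup n 𝕜 × Matrix n n 𝕜 |
      (star (p.1 : Matrix n n 𝕜) * p.2).PosSemidef} :=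
    isClosed_setOf_posSemidef.preimage (by fun_prop)
  convert isClosedMap_snd_of_compactSpace _ hC using 1
  ext X
  simp

theorem exists_unitary_star_mul_posSemidef_of_isUnit_det {X : Matrix n n ℂ} (hX : IsUnit X.det) :
    ∃ V ∈ unitaryGroup n ℂ, (star V * X).PosSemidef := by
  set P := msqrt (Xᴴ * X)
  have hP : P.PosSemidef := posSemidef_msqrt (posSemidef_conjTranspose_mul_self X)
  have hPP : P * P = Xᴴ * X := msqrt_mul_msqrt (posSemidef_conjTranspose_mul_self X)
  have hPdet : IsUnit P.det := by
    have : IsUnit (P.det * P.det) := by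
      rw [← det_mul, hPP, det_mul, det_conjTranspose]
      exact hX.star.mul hX
    exact isUnit_of_mul_isUnit_left this
  have hVX : star (X * P⁻¹) * X = P := by
    rw [star_eq_conjTranspose, conjTranspose_mul, conjTranspose_nonsing_inv, hP.isHermitian.eq,
      Matrix.mul_assoc, ← hPP, ← Matrix.mul_assoc, nonsing_inv_mul _ hPdet, Matrix.one_mul]
  refine ⟨X * P⁻¹, mem_unitaryGroup_iff'.mpr ?_, by rwa [hVX]⟩
  rw [← Matrix.mul_assoc, hVX, mul_nonsing_inv _ hPdet]

theorem mem_closure_setOf_isUnit_det (X : Matrix n n ℂ) :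
    X ∈ closure {Y : Matrix n n ℂ | IsUnit Y.det} := by
  have hfin : {c : ℂ | ¬IsUnit (X + c • 1).det}.Finite := by
    refine (X.finite_spectrum.preimage neg_injective.injOn).subset fun c hc => ?_
    rw [Set.mem_preimage, spectrum.mem_iff, Algebra.algebraMap_eq_smul_one, neg_smul,
      ← neg_add', IsUnit.neg_iff, add_comm, isUnit_iff_isUnit_det]
    exact hc
  refine mem_closure_of_tendsto (f := fun c : ℂ => X + c • 1) (b := 𝓝[≠] 0) ?_ ?_
  · have : Continuous fun c : ℂ => X + c • (1 : Matrix n n ℂ) := by fun_prop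
    exact (this.tendsto' 0 X (by simp)).mono_left nhdsWithin_le_nhds
  · exact nhdsNE_le_cofinite 0 (eventually_cofinite.mpr hfin)

theorem exists_unitary_star_mul_posSemidef (X : Matrix n n ℂ) :
    ∃ V ∈ unitaryGroup n ℂ, (star V * X).PosSemidef :=
  closure_minimal (fun _ hY => exists_unitary_star_mul_posSemidef_of_isUnit_det hY)
    isClosed_setOf_exists_unitary_star_mul_posSemidef (mem_closure_setOf_isUnit_det X)

theorem exists_unitary_eq_mul_msqrt (X : Matrix n n ℂ) :
    ∃ V ∈ unitaryGroup n ℂ, X = V * msqrt (Xᴴ * X) := by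
  obtain ⟨V, hV, hP⟩ := exists_unitary_star_mul_posSemidef X
  have hX : X = V * (star V * X) := by
    rw [← Matrix.mul_assoc, mem_unitaryGroup_iff.mp hV, Matrix.one_mul]
  generalize star V * X = P at hP hX
  subst hX
  have hPP : P * P = (V * P)ᴴ * (V * P) := by
    rw [conjTranspose_mul, hP.isHermitian.eq, Matrix.mul_assoc, ← Matrix.mul_assoc Vᴴ,
      ← star_eq_conjTranspose, mem_unitaryGroup_iff'.mp hV, Matrix.one_mul]
  exact ⟨V, hV, by rw [msqrt_eq_of_mul_self_eq hP hPP]⟩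

theorem exists_unitary_norm_trace_mul_eq_traceNorm (X : Matrix n n ℂ) :
    ∃ W ∈ unitaryGroup n ℂ, ‖(X * W).trace‖ = traceNorm X := by
  obtain ⟨V, hV, hX⟩ := exists_unitary_eq_mul_msqrt X
  have hP := posSemidef_msqrt (posSemidef_conjTranspose_mul_self X)
  have htr : (X * star V).trace = (msqrt (Xᴴ * X)).trace := by
    conv_lhs => rw [hX, Matrix.mul_assoc, trace_mul_comm, Matrix.mul_assoc,
      mem_unitaryGroup_iff'.mp hV, Matrix.mul_one]
  refine ⟨star V, Unitary.star_mem hV, ?_⟩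
  rw [htr, traceNorm]
  simpa using congrArg Complex.re (Complex.norm_of_nonneg' hP.trace_nonneg)

end Polar

end Matrix

open Matrix

theorem fidelity_mul_conjTranspose {α β : Type*} [Fintype α] [Fintype β] [DecidableEq α]
    [DecidableEq β] (M N : Matrix α β ℂ) :
    fidelity (M * Mᴴ) (N * Nᴴ) = traceNorm (Nᴴ * M) ^ 2 := by
  have hM := posSemidef_self_mul_conjTranspose M
  have hN := posSemidef_self_mul_conjTranspose N
  set R := msqrt (M * Mᴴ)
  set S := msqrt (N * Nᴴ)
  have hR : Rᴴ = R := (posSemidef_msqrt hM).isHermitian.eq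
  have hS : Sᴴ = S := (posSemidef_msqrt hN).isHermitian.eq
  have h₁ : (R * S)ᴴ * (R * S) = (S * M) * (S * M)ᴴ := by
    simp only [conjTranspose_mul, hR, hS, Matrix.mul_assoc]
    rw [← Matrix.mul_assoc R, msqrt_mul_msqrt hM, Matrix.mul_assoc]
  have h₂ : (Nᴴ * M)ᴴ * (Nᴴ * M) = (S * M)ᴴ * (S * M) := by
    simp only [conjTranspose_mul, conjTranspose_conjTranspose, hS, Matrix.mul_assoc]
    rw [← Matrix.mul_assoc S, msqrt_mul_msqrt hN, Matrix.mul_assoc]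
  rw [fidelity, traceNorm, traceNorm, h₁, h₂, trace_msqrt_conjTranspose_mul_self]

theorem ptrSnd_outer {α β : Type*} [Fintype β] (ψ φ : α × β → ℂ) :
    ptrSnd (outer ψ φ) = of (Function.curry ψ) * (of (Function.curry φ))ᴴ := by
  ext a a'
  simp [ptrSnd, outer, mul_apply]

open Kronecker in
theorem star_dotProduct_one_kronecker_mulVec {α β : Type*} [Fintype α] [Fintype β]
    [DecidableEq α] (ψ φ : α × β → ℂ) (U : Matrix β β ℂ) :
    star φ ⬝ᵥ (((1 : Matrix α α ℂ) ⊗ₖ U) *ᵥ ψ) =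
      ((of (Function.curry φ))ᴴ * of (Function.curry ψ) * Uᵀ).trace := by
  simp only [dotProduct, Pi.star_apply, RCLike.star_def, mulVec, kroneckerMap_apply, one_apply,
    ite_mul, one_mul, zero_mul, Fintype.sum_prod_type, Finset.sum_ite_irrel, Finset.sum_const_zero,
    Finset.sum_ite_eq, Finset.mem_univ, ↓reduceIte, Finset.mul_sum, trace, diag_apply, mul_apply,
    conjTranspose_apply, of_apply, Function.curry_apply, transpose_apply, Finset.sum_mul]
  rw [Finset.sum_comm]
  refine Finset.sum_congr rfl fun b _ => ?_
  rw [Finset.sum_comm]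
  exact Finset.sum_congr rfl fun b' _ => Finset.sum_congr rfl fun a _ => by ring

open Kronecker in
theorem uhlmann_theorem_general {α β : Type*} [Fintype α] [Fintype β] [DecidableEq α] [DecidableEq β]
    (ψ φ : α × β → ℂ) :
    ∃ U : Matrix β β ℂ, U ∈ Matrix.unitaryGroup β ℂ ∧
      fidelity (ptrSnd (outer ψ ψ)) (ptrSnd (outer φ φ)) =
        ‖star φ ⬝ᵥ (((1 : Matrix α α ℂ) ⊗ₖ U) *ᵥ ψ)‖ ^ 2 := by
  obtain ⟨W, hW, hWtr⟩ :=
    exists_unitary_norm_trace_mul_eq_traceNorm ((of (Function.curry φ))ᴴ * of (Function.curry ψ))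
  refine ⟨Wᵀ, transpose_mem_unitaryGroup_iff.mpr hW, ?_⟩
  rw [ptrSnd_outer, ptrSnd_outer, fidelity_mul_conjTranspose, star_dotProduct_one_kronecker_mulVec,
    transpose_transpose, hWtr]

open Kronecker in
/-- **Uhlmann's theorem** (achievability direction): for bipartite pure states
`|ψ⟩, |φ⟩` on `A ⊗ B` with reduced states `ρ_A, σ_A`, there is a unitary `U`
acting only on `B` such that `F(ρ_A, σ_A) = |⟨φ|(id_A ⊗ U)|ψ⟩|²`. -/
theorem uhlmann_theorem {α β : Type*} [Fintype α] [Fintype β] [DecidableEq α] [DecidableEq β]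
    (ψ φ : α × β → ℂ)
    (hψ : ∑ x, ‖ψ x‖ ^ 2 = 1) (hφ : ∑ x, ‖φ x‖ ^ 2 = 1) :
    ∃ U : Matrix β β ℂ, U ∈ Matrix.unitaryGroup β ℂ ∧
      fidelity (ptrSnd (outer ψ ψ)) (ptrSnd (outer φ φ)) =
        ‖star φ ⬝ᵥ (((1 : Matrix α α ℂ) ⊗ₖ U) *ᵥ ψ)‖ ^ 2 :=
  uhlmann_theorem_general ψ φ
end

section
/- Let P₀, ..., P_m be projectors on a Hilbert space and let ρ* be a density matrix invariant under all permutations of the m+1 subsystems on which P₀,...,P_m act identically (i.e., P_i acts as the same projector on the i-th subsystem). Define exchangeable {0,1}-valued random variables X₀,...,X_m by the joint measurement outcomes. If Pr[X₁=0 ∧ ... ∧ X_m=0] ≥ 1/2, then Pr[X₀=1 | X₁=0 ∧ ... ∧ X_m=0] ≤ 2/(m+1). -/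
/-- For exchangeable `{0,1}`-valued random variables `X₀, …, X_m` (their joint
distribution `p` is invariant under permutations of the indices), if
`Pr[X₁ = 0 ∧ ⋯ ∧ X_m = 0] ≥ 1/2`, then
`Pr[X₀ = 1 | X₁ = 0 ∧ ⋯ ∧ X_m = 0] ≤ 2/(m+1)`. -/
theorem exchangeable_conditional_bound (m : ℕ) (p : (Fin (m + 1) → Bool) → ℝ)
    (hp0 : ∀ x, 0 ≤ p x) (hp1 : ∑ x, p x = 1)
    (hperm : ∀ (π : Equiv.Perm (Fin (m + 1))) (x : Fin (m + 1) → Bool), p (x ∘ π) = p x)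
    (hbig : (1 : ℝ) / 2 ≤
      ∑ x ∈ Finset.univ.filter (fun x : Fin (m + 1) → Bool => ∀ i, i ≠ 0 → x i = false), p x) :
    (∑ x ∈ Finset.univ.filter
        (fun x : Fin (m + 1) → Bool => x 0 = true ∧ ∀ i, i ≠ 0 → x i = false), p x) /
      (∑ x ∈ Finset.univ.filter (fun x : Fin (m + 1) → Bool => ∀ i, i ≠ 0 → x i = false), p x) ≤
      2 / (m + 1) := by
  set e : Fin (m + 1) → (Fin (m + 1) → Bool) := fun i j => decide (j = i) with he
  -- numerator is p (e 0)
  have hnum : (∑ x ∈ Finset.univ.filter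
      (fun x : Fin (m + 1) → Bool => x 0 = true ∧ ∀ i, i ≠ 0 → x i = false), p x) = p (e 0) := by
    have : Finset.univ.filter
        (fun x : Fin (m + 1) → Bool => x 0 = true ∧ ∀ i, i ≠ 0 → x i = false) = {e 0} := by
      ext x
      simp only [Finset.mem_filter, Finset.mem_univ, true_and, Finset.mem_singleton]
      constructor
      · rintro ⟨h0, hrest⟩
        funext j
        by_cases hj : j = 0
        · subst hj; simpa [e] using h0
        · simp [e, hj, hrest j hj]
      · rintro rfl
        exact ⟨by simp [e], fun i hi => by simp [e, hi]⟩
    rw [this, Finset.sum_singleton]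
  -- exchangeability: p (e i) = p (e 0)
  have heq : ∀ i, p (e i) = p (e 0) := by
    intro i
    have : e i = e 0 ∘ Equiv.swap 0 i := by
      funext j
      simp only [Function.comp, e, decide_eq_decide]
      rw [Equiv.swap_apply_eq_iff]
      simp
    rw [this, hperm]
  -- e is injective
  have hinj : Function.Injective e := by
    intro a b hab
    have := congrFun hab a
    simpa [e, eq_comm] using this
  -- (m+1) * p (e 0) ≤ 1
  have hsum : (m + 1 : ℝ) * p (e 0) ≤ 1 := by
    have h1 : ∑ i : Fin (m + 1), p (e i) ≤ ∑ x, p x := by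
      have himg : ∑ x ∈ Finset.univ.image e, p x = ∑ i : Fin (m + 1), p (e i) :=
        Finset.sum_image (fun a _ b _ h => hinj h)
      rw [← himg]
      exact Finset.sum_le_sum_of_subset_of_nonneg (Finset.subset_univ _)
        (fun x _ _ => hp0 x)
    have h2 : ∑ i : Fin (m + 1), p (e i) = (m + 1 : ℝ) * p (e 0) := by
      rw [Finset.sum_congr rfl (fun i _ => heq i)]
      simp [Finset.sum_const, mul_comm]
    linarith [hp1 ▸ h1, h2 ▸ h1]
  set D := ∑ x ∈ Finset.univ.filter
      (fun x : Fin (m + 1) → Bool => ∀ i, i ≠ 0 → x i = false), p x with hD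
  have hDpos : 0 < D := lt_of_lt_of_le (by norm_num) hbig
  rw [hnum, div_le_div_iff₀ hDpos (by positivity)]
  have hpe : 0 ≤ p (e 0) := hp0 _
  nlinarith [hbig, hsum, hpe]
end
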